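/- arXiv:1707.03096 — 4 statements merged into one kernel-verified Lean document; each statement's English description precedes it below -/
import Mathlib

section
/- Let m ≥ 1 be a natural number, let j ∈ {1, …, m}, and let n be a natural number. Then there exists a constant C > 0 such that for every ξ ∈ ℝ^m with ξ ≠ 0, the n-th iterated Fréchet derivative at ξ of the function f : ℝ^m \ {0} → ℝ, f(ξ) = ξ_j/‖ξ‖, satisfies ‖D^n f(ξ)‖ ≤ C·‖ξ‖^{-n}. -/
open Metric Set

/-- Mikhlin-type symbol estimate for `ξ ↦ ξ_j/‖ξ‖`: there is `C > 0` such that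
for every `ξ ≠ 0` the `n`-th iterated Fréchet derivative satisfies
`‖D^n f(ξ)‖ ≤ C·‖ξ‖^{-n}`. -/
theorem stmt_2 (m n : ℕ) (hm : 1 ≤ m) (j : Fin m) :
    ∃ C > 0, ∀ ξ : EuclideanSpace ℝ (Fin m), ξ ≠ 0 →
      ‖iteratedFDeriv ℝ n (fun ξ : EuclideanSpace ℝ (Fin m) => ξ j / ‖ξ‖) ξ‖ ≤
        C * ‖ξ‖ ^ (-(n : ℤ)) := by
  set E := EuclideanSpace ℝ (Fin m)
  set f : E → ℝ := fun ξ => ξ j / ‖ξ‖ with hf_def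
  set s : Set E := {x | x ≠ 0} with hs_def
  have hso : IsOpen s := isOpen_ne
  have hsu : UniqueDiffOn ℝ s := hso.uniqueDiffOn
  have hfc : ContDiffOn ℝ (⊤ : ℕ∞) f s := by
    intro x hx
    have h1 : ContDiffAt ℝ (⊤ : ℕ∞) (fun ξ : E => ξ j) x :=
      (EuclideanSpace.proj j : E →L[ℝ] ℝ).contDiff.contDiffAt
    exact ((h1.div (contDiffAt_norm ℝ hx) (norm_ne_zero_iff.mpr hx))).contDiffWithinAt
  have hcont : ContinuousOn (fun x => ‖iteratedFDeriv ℝ n f x‖) s := by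
    have := hfc.continuousOn_iteratedFDerivWithin (m := n) (by exact_mod_cast le_top) hsu
    refine (this.congr fun x hx => ?_).norm
    exact (iteratedFDerivWithin_of_isOpen n hso hx).symm
  have hsub : sphere (0 : E) 1 ⊆ s := fun x hx => by
    simp only [mem_sphere, dist_zero_right] at hx
    intro h0; rw [h0] at hx; simp at hx
  obtain ⟨C₀, hC₀⟩ := (isCompact_sphere (0 : E) 1).exists_bound_of_continuousOn
    (hcont.mono hsub)
  set C : ℝ := max C₀ 0 + 1 with hC_def
  have hCpos : 0 < C := by positivity
  refine ⟨C, hCpos, fun ξ hξ => ?_⟩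
  have hξn : (0 : ℝ) < ‖ξ‖ := norm_pos_iff.mpr hξ
  set c : ℝ := ‖ξ‖
  set y : E := c⁻¹ • ξ with hy_def
  have hy : y ∈ sphere (0 : E) 1 := by
    simp only [hy_def, mem_sphere, dist_zero_right, norm_smul, norm_inv,
      Real.norm_eq_abs, abs_of_pos hξn]
    exact inv_mul_cancel₀ hξn.ne'
  have hys : y ∈ s := hsub hy
  set g : E →L[ℝ] E := c⁻¹ • ContinuousLinearMap.id ℝ E with hg_def
  have hgξ : g ξ = y := rfl
  have hpre : g ⁻¹' s = s := by
    ext x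
    simp only [hs_def, mem_preimage, mem_setOf_eq, hg_def, ContinuousLinearMap.smul_apply,
      ContinuousLinearMap.id_apply, smul_ne_zero_iff, ne_eq]
    constructor
    · rintro ⟨_, h⟩; exact h
    · intro h; exact ⟨inv_ne_zero hξn.ne', h⟩
  have h's : UniqueDiffOn ℝ (⇑g ⁻¹' s) := by rw [hpre]; exact hsu
  have hfg : f ∘ g = f := by
    funext x
    simp only [Function.comp_apply, hf_def, hg_def, ContinuousLinearMap.smul_apply,
      ContinuousLinearMap.id_apply]
    by_cases hx : x = 0
    · simp [hx]
    · rw [show ((c⁻¹ • x : E)) j = c⁻¹ * x j from rfl, norm_smul,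
        Real.norm_eq_abs, abs_of_pos (inv_pos.mpr hξn)]
      rw [mul_div_mul_left _ _ (inv_ne_zero hξn.ne')]
  have key := g.iteratedFDerivWithin_comp_right (f := f) hfc hsu h's
    (x := ξ) (hgξ ▸ hys) (i := n) (by exact_mod_cast le_top)
  rw [hfg, hpre, hgξ] at key
  have e1 : iteratedFDerivWithin ℝ n f s ξ = iteratedFDeriv ℝ n f ξ :=
    iteratedFDerivWithin_of_isOpen n hso hξ
  have e2 : iteratedFDerivWithin ℝ n f s y = iteratedFDeriv ℝ n f y :=
    iteratedFDerivWithin_of_isOpen n hso hys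
  rw [e1, e2] at key
  have hgn : ‖g‖ ≤ c⁻¹ := by
    refine ContinuousLinearMap.opNorm_le_bound _ (by positivity) fun x => ?_
    simp only [hg_def, ContinuousLinearMap.smul_apply, ContinuousLinearMap.id_apply,
      norm_smul, norm_inv, Real.norm_eq_abs, abs_of_pos hξn]
    exact le_rfl
  have hDy : ‖iteratedFDeriv ℝ n f y‖ ≤ C := by
    have := hC₀ y hy
    have h2 : ‖iteratedFDeriv ℝ n f y‖ ≤ C₀ := (le_abs_self _).trans this
    calc ‖iteratedFDeriv ℝ n f y‖ ≤ max C₀ 0 := h2.trans (le_max_left _ _)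
      _ ≤ C := by rw [hC_def]; linarith
  calc ‖iteratedFDeriv ℝ n f ξ‖
      = ‖(iteratedFDeriv ℝ n f y).compContinuousLinearMap fun _ => g‖ := by rw [← key]
    _ ≤ ‖iteratedFDeriv ℝ n f y‖ * ∏ _i : Fin n, ‖g‖ :=
        ContinuousMultilinearMap.norm_compContinuousLinearMap_le _ _
    _ = ‖iteratedFDeriv ℝ n f y‖ * ‖g‖ ^ n := by
        rw [Finset.prod_const, Finset.card_univ, Fintype.card_fin]
    _ ≤ C * (c⁻¹) ^ n := by
        exact mul_le_mul hDy (pow_le_pow_left₀ (norm_nonneg _) hgn n)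
          (pow_nonneg (norm_nonneg _) n) hCpos.le
    _ = C * ‖ξ‖ ^ (-(n : ℤ)) := by
        rw [zpow_neg, zpow_natCast, inv_pow]
end

section
/- Let m ≥ 1 and n be natural numbers. Then there exists a constant C > 0, independent of a, such that for every real a ≥ 0 and every ξ ∈ ℝ^m with ξ ≠ 0, the n-th iterated Fréchet derivative at ξ of the function g_a : ℝ^m \ {0} → ℝ, g_a(ξ) = e^{-a‖ξ‖}, satisfies ‖D^n g_a(ξ)‖ ≤ C·‖ξ‖^{-n}. -/
set_option maxHeartbeats 1600000

open Real Set
open scoped Nat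

-- poly-times-exponential bound
lemma aux_poly_exp (n : ℕ) {t : ℝ} (ht : 0 ≤ t) :
    Real.exp (-t) * (1 + t) ^ n ≤ 2 ^ n * (1 + (n ! : ℝ)) := by
  have htn : t ^ n ≤ (n ! : ℝ) * Real.exp t := by
    have h1 : t ^ n / n ! ≤ Real.exp t := by
      refine le_trans ?_ (Real.sum_le_exp_of_nonneg ht (n + 1))
      exact Finset.single_le_sum (f := fun i => t ^ i / i !)
        (fun i _ => by positivity) (Finset.self_mem_range_succ n)
    have hfac : (0 : ℝ) < n ! := by positivity
    rw [div_le_iff₀ hfac] at h1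
    linarith [h1]
  have h2 : (1 + t) ^ n ≤ 2 ^ n * (1 + t ^ n) := by
    rcases le_total t 1 with h | h
    · have : (1 + t) ^ n ≤ 2 ^ n := pow_le_pow_left₀ (by linarith) (by linarith) n
      have : (0:ℝ) ≤ t ^ n := by positivity
      nlinarith [pow_le_pow_left₀ (by linarith : (0:ℝ) ≤ 1 + t) (by linarith : 1 + t ≤ 2) n,
        pow_pos (by norm_num : (0:ℝ) < 2) n]
    · have h3 : (1 + t) ^ n ≤ (2 * t) ^ n := pow_le_pow_left₀ (by linarith) (by linarith) n
      have h4 : (2 * t) ^ n = 2 ^ n * t ^ n := mul_pow 2 t n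
      nlinarith [pow_pos (by norm_num : (0:ℝ) < 2) n]
  have hexp1 : (1:ℝ) ≤ Real.exp t := Real.one_le_exp ht
  have key : (1 + t) ^ n ≤ 2 ^ n * (1 + (n ! : ℝ)) * Real.exp t := by
    calc (1 + t) ^ n ≤ 2 ^ n * (1 + t ^ n) := h2
      _ ≤ 2 ^ n * (Real.exp t + (n ! : ℝ) * Real.exp t) := by
          have : (0:ℝ) < 2 ^ n := by positivity
          nlinarith
      _ = 2 ^ n * (1 + (n ! : ℝ)) * Real.exp t := by ring
  rw [Real.exp_neg]
  rw [inv_mul_le_iff₀ (Real.exp_pos t)]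
  calc (1 + t) ^ n ≤ 2 ^ n * (1 + (n ! : ℝ)) * Real.exp t := key
    _ = Real.exp t * (2 ^ n * (1 + (n ! : ℝ))) := by ring

/-- Symbol estimate for the exponential multiplier `ξ ↦ e^{-a‖ξ‖}`, with a constant
uniform in the parameter `a ≥ 0`: there is `C > 0`, independent of `a`, such that for
every `a ≥ 0` and every `ξ ≠ 0`, `‖D^n g_a(ξ)‖ ≤ C·‖ξ‖^{-n}`. -/
theorem stmt_3 (m n : ℕ) (hm : 1 ≤ m) :
    ∃ C > 0, ∀ a : ℝ, 0 ≤ a → ∀ ξ : EuclideanSpace ℝ (Fin m), ξ ≠ 0 →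
      ‖iteratedFDeriv ℝ n (fun ξ : EuclideanSpace ℝ (Fin m) => Real.exp (-a * ‖ξ‖)) ξ‖ ≤
        C * ‖ξ‖ ^ (-(n : ℤ)) := by
  classical
  set E := EuclideanSpace ℝ (Fin m)
  set s : Set E := {0}ᶜ with hs_def
  have hso : IsOpen s := isOpen_compl_singleton
  have hsu : UniqueDiffOn ℝ s := hso.uniqueDiffOn
  set Nf : E → ℝ := fun x => ‖x‖ with hNf_def
  have hN : ContDiffOn ℝ ((⊤ : ℕ∞) : WithTop ℕ∞) Nf s := by
    intro x hx
    exact (contDiffAt_norm ℝ (by simpa [hs_def] using hx)).contDiffWithinAt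
  -- Step 1: sphere bounds and homogeneity
  have key : ∀ i : ℕ, ∃ K : ℝ, 0 ≤ K ∧ ∀ ξ : E, ξ ≠ 0 →
      ‖iteratedFDerivWithin ℝ i Nf s ξ‖ ≤ K * ‖ξ‖ * (‖ξ‖⁻¹) ^ i := by
    intro i
    have hsub : Metric.sphere (0 : E) 1 ⊆ s := by
      intro x hx
      simp only [hs_def, mem_compl_iff, mem_singleton_iff]
      intro h0
      rw [mem_sphere_iff_norm, h0] at hx
      simp at hx
    have hcont : ContinuousOn (fun x => iteratedFDerivWithin ℝ i Nf s x) s :=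
      hN.continuousOn_iteratedFDerivWithin (by exact_mod_cast le_top) hsu
    obtain ⟨K0, hK0⟩ := (isCompact_sphere (0 : E) 1).exists_bound_of_continuousOn
      (hcont.mono hsub)
    refine ⟨max K0 0, le_max_right _ _, fun ξ hξ => ?_⟩
    set c : ℝ := ‖ξ‖ with hc_def
    have hc : 0 < c := norm_pos_iff.2 hξ
    set u : E := c⁻¹ • ξ with hu_def
    have hu : ‖u‖ = 1 := by
      rw [hu_def, norm_smul, norm_inv, Real.norm_eq_abs, abs_of_pos hc, ← hc_def,
        inv_mul_cancel₀ hc.ne']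
    have hus : u ∈ s := hsub (by simpa [mem_sphere_iff_norm] using hu)
    set g : E →L[ℝ] E := c⁻¹ • ContinuousLinearMap.id ℝ E with hg_def
    have hpre : g ⁻¹' s = s := by
      ext x
      simp only [hg_def, hs_def, mem_preimage, mem_compl_iff, mem_singleton_iff,
        ContinuousLinearMap.smul_apply, ContinuousLinearMap.id_apply, smul_eq_zero,
        inv_eq_zero, not_or]
      constructor
      · rintro ⟨-, h⟩; exact h
      · intro h; exact ⟨hc.ne', h⟩
    have hgξ : g ξ = u := by simp [hg_def, hu_def]
    have hcomp : Nf ∘ g = c⁻¹ • Nf := by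
      funext x
      simp only [Function.comp_apply, Pi.smul_apply, hNf_def, hg_def,
        ContinuousLinearMap.smul_apply, ContinuousLinearMap.id_apply, smul_eq_mul,
        norm_smul, norm_inv, Real.norm_eq_abs, abs_of_pos hc]
    have hξs : ξ ∈ s := by simp [hs_def, hξ]
    have heq := ContinuousLinearMap.iteratedFDerivWithin_comp_right (f := Nf) g hN hsu
      (by rw [hpre]; exact hsu) (x := ξ) (by rw [hgξ]; exact hus) (i := i)
      (by exact_mod_cast le_top)
    rw [hpre, hcomp] at heq
    have hsmul : iteratedFDerivWithin ℝ i (c⁻¹ • Nf) s ξ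
        = c⁻¹ • iteratedFDerivWithin ℝ i Nf s ξ :=
      iteratedFDerivWithin_const_smul_apply
        ((hN ξ hξs).of_le (by exact_mod_cast le_top)) hsu hξs
    rw [hsmul, hgξ] at heq
    have hnorm : c⁻¹ * ‖iteratedFDerivWithin ℝ i Nf s ξ‖
        = ‖(iteratedFDerivWithin ℝ i Nf s u).compContinuousLinearMap fun _ => g‖ := by
      rw [← heq, norm_smul c⁻¹ (iteratedFDerivWithin ℝ i Nf s ξ), norm_inv,
        Real.norm_eq_abs, abs_of_pos hc]
    have hgn : ‖g‖ ≤ c⁻¹ := by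
      apply ContinuousLinearMap.opNorm_le_bound _ (inv_pos.2 hc).le
      intro x
      rw [hg_def]
      simp only [ContinuousLinearMap.smul_apply, ContinuousLinearMap.id_apply,
        norm_smul, norm_inv, Real.norm_eq_abs, abs_of_pos hc]
      exact le_rfl
    have hbd : ‖(iteratedFDerivWithin ℝ i Nf s u).compContinuousLinearMap fun _ => g‖
        ≤ max K0 0 * (c⁻¹) ^ i := by
      calc ‖(iteratedFDerivWithin ℝ i Nf s u).compContinuousLinearMap fun _ => g‖
          ≤ ‖iteratedFDerivWithin ℝ i Nf s u‖ * ∏ _j : Fin i, ‖g‖ :=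
            ContinuousMultilinearMap.norm_compContinuousLinearMap_le _ _
        _ ≤ max K0 0 * (c⁻¹) ^ i := by
            apply mul_le_mul
            · exact le_trans (hK0 u (by simpa [mem_sphere_iff_norm] using hu))
                (le_max_left _ _)
            · rw [Finset.prod_const]
              simp only [Finset.card_univ, Fintype.card_fin]
              exact pow_le_pow_left₀ (norm_nonneg _) hgn i
            · positivity
            · exact le_max_right _ _
    have := hnorm.le.trans hbd
    calc ‖iteratedFDerivWithin ℝ i Nf s ξ‖ = c * (c⁻¹ * ‖iteratedFDerivWithin ℝ i Nf s ξ‖) := by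
          field_simp
      _ ≤ c * (max K0 0 * (c⁻¹) ^ i) := by
          apply mul_le_mul_of_nonneg_left (hnorm.le.trans hbd) hc.le
      _ = max K0 0 * c * (c⁻¹) ^ i := by ring
  choose K hK0 hK using key
  set Kmax : ℝ := ∑ i ∈ Finset.range (n + 1), K i with hKmax_def
  have hKmax0 : 0 ≤ Kmax := Finset.sum_nonneg fun i _ => hK0 i
  have hKle : ∀ i ≤ n, K i ≤ Kmax :=
    fun i hi => Finset.single_le_sum (fun j _ => hK0 j) (Finset.mem_range.2 (by omega))
  refine ⟨n ! * (2 ^ n * (1 + (n ! : ℝ))) * (Kmax + 1) ^ n, by positivity,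
    fun a ha ξ hξ => ?_⟩
  set c : ℝ := ‖ξ‖ with hc_def
  have hc : 0 < c := norm_pos_iff.2 hξ
  have hξs : ξ ∈ s := by simp [hs_def, hξ]
  set f : E → ℝ := fun x => -a * ‖x‖ with hf_def
  have hfc : ContDiffOn ℝ ((⊤ : ℕ∞) : WithTop ℕ∞) f s := by
    have : f = fun x => (-a) • Nf x := by funext x; simp [hf_def, hNf_def, smul_eq_mul]
    rw [this]
    exact hN.const_smul (-a)
  have hrw : (fun ξ : E => Real.exp (-a * ‖ξ‖)) = Real.exp ∘ f := rfl
  rw [hrw, ← iteratedFDerivWithin_of_isOpen (f := Real.exp ∘ f) n hso hξs]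
  set D : ℝ := (Kmax + 1) * (a + c⁻¹) with hD_def
  have main : ‖iteratedFDerivWithin ℝ n (Real.exp ∘ f) s ξ‖
      ≤ n ! * Real.exp (-a * c) * D ^ n := by
    apply norm_iteratedFDerivWithin_comp_le (t := (univ : Set ℝ))
      (N := ((⊤ : ℕ∞) : WithTop ℕ∞))
      Real.contDiff_exp.contDiffOn hfc (by exact_mod_cast le_top)
      uniqueDiffOn_univ hsu (mapsTo_univ _ _) hξs
    · -- derivatives of exp bounded by exp (f ξ)
      intro i _
      rw [iteratedFDerivWithin_univ, norm_iteratedFDeriv_eq_norm_iteratedDeriv,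
        iteratedDeriv_eq_iterate, Real.iter_deriv_exp]
      rw [Real.norm_eq_abs, abs_of_pos (Real.exp_pos _)]
    · -- derivatives of f bounded by D ^ i
      intro i hi1 hin
      have hfeq : f = (-a) • Nf := by funext x; simp [hf_def, hNf_def, smul_eq_mul]
      rw [hfeq, iteratedFDerivWithin_const_smul_apply
        ((hN ξ hξs).of_le (by exact_mod_cast le_top)) hsu hξs, norm_smul, Real.norm_eq_abs,
        abs_neg, abs_of_nonneg ha]
      have h1 : a * ‖iteratedFDerivWithin ℝ i Nf s ξ‖ ≤ a * (K i * c * (c⁻¹) ^ i) :=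
        mul_le_mul_of_nonneg_left (hK i ξ hξ) ha
      refine h1.trans ?_
      -- a * (K i * c * c⁻¹ ^ i) ≤ D ^ i
      obtain ⟨j, rfl⟩ : ∃ j, i = j + 1 := ⟨i - 1, by omega⟩
      have hcc : c * (c⁻¹) ^ (j + 1) = (c⁻¹) ^ j := by
        rw [pow_succ']
        field_simp
      have hKi : K (j + 1) ≤ Kmax + 1 := (hKle _ hin).trans (by linarith)
      have hDe : D ^ (j + 1) = (Kmax + 1) ^ (j + 1) * (a + c⁻¹) ^ (j + 1) := by
        rw [hD_def, mul_pow]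
      have h2 : (Kmax + 1) ≤ (Kmax + 1) ^ (j + 1) :=
        le_self_pow₀ (by linarith) (by omega)
      have h3 : a * (c⁻¹) ^ j ≤ (a + c⁻¹) ^ (j + 1) := by
        rw [pow_succ']
        apply mul_le_mul (by linarith [inv_pos.2 hc])
          (pow_le_pow_left₀ (by positivity) (by linarith) j) (by positivity)
          (by positivity)
      calc a * (K (j+1) * c * (c⁻¹) ^ (j+1)) = K (j+1) * (a * (c⁻¹) ^ j) := by
            rw [pow_succ' c⁻¹ j]
            field_simp
        _ ≤ (Kmax + 1) * (a + c⁻¹) ^ (j + 1) := by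
            apply mul_le_mul hKi h3 (by positivity) (by linarith)
        _ ≤ (Kmax + 1) ^ (j + 1) * (a + c⁻¹) ^ (j + 1) := by
            apply mul_le_mul_of_nonneg_right h2 (by positivity)
        _ = D ^ (j + 1) := hDe.symm
  refine main.trans ?_
  -- final arithmetic
  have hsplit : (a + c⁻¹) = c⁻¹ * (a * c + 1) := by field_simp
  have hzpow : c ^ (-(n : ℤ)) = (c⁻¹) ^ n := by
    rw [zpow_neg, zpow_natCast, inv_pow]
  rw [hzpow]
  have hDn : D ^ n = (Kmax + 1) ^ n * ((c⁻¹) ^ n * (a * c + 1) ^ n) := by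
    rw [hD_def, hsplit, mul_pow, mul_pow]
  rw [hDn]
  have hexp : Real.exp (-a * c) * (1 + a * c) ^ n ≤ 2 ^ n * (1 + (n ! : ℝ)) := by
    have := aux_poly_exp n (t := a * c) (by positivity)
    simpa [neg_mul] using this
  calc (n ! : ℝ) * Real.exp (-a * c) * ((Kmax + 1) ^ n * ((c⁻¹) ^ n * (a * c + 1) ^ n))
      = (n ! : ℝ) * (Real.exp (-a * c) * (1 + a * c) ^ n) * (Kmax + 1) ^ n * (c⁻¹) ^ n := by
        ring_nf
    _ ≤ (n ! : ℝ) * (2 ^ n * (1 + (n ! : ℝ))) * (Kmax + 1) ^ n * (c⁻¹) ^ n := by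
        apply mul_le_mul_of_nonneg_right _ (by positivity)
        apply mul_le_mul_of_nonneg_right _ (by positivity)
        apply mul_le_mul_of_nonneg_left hexp (by positivity)
    _ = (n ! : ℝ) * (2 ^ n * (1 + (n ! : ℝ))) * (Kmax + 1) ^ n * (c⁻¹) ^ n := rfl
end

section
/- Let m ≥ 1 and n be natural numbers and let d > 0 be a real number. Then there exists a constant C > 0 (depending on n and d) such that for every ξ ∈ ℝ^m with ξ ≠ 0, the n-th iterated Fréchet derivative at ξ of the function h : ℝ^m \ {0} → ℝ, h(ξ) = (1 + e^{-2d‖ξ‖})^{-1}, satisfies ‖D^n h(ξ)‖ ≤ C·‖ξ‖^{-n}. -/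
open Set Finset Nat

noncomputable section
namespace Stmt4Aux

variable {E : Type*} [NormedAddCommGroup E] [NormedSpace ℝ E]

/-- Scalar multiplication by a nonzero constant as a continuous linear equivalence. -/
def smulCLE (c : ℝ) (hc : c ≠ 0) : E ≃L[ℝ] E :=
  { LinearEquiv.smulOfNeZero ℝ E c hc with
    continuous_toFun := continuous_const_smul c
    continuous_invFun := continuous_const_smul _ }

@[simp] lemma smulCLE_apply (c : ℝ) (hc : c ≠ 0) (x : E) : smulCLE c hc x = c • x := rfl

lemma smulCLE_coe (c : ℝ) (hc : c ≠ 0) :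
    ((smulCLE c hc : E ≃L[ℝ] E) : E →L[ℝ] E) = c • ContinuousLinearMap.id ℝ E := by
  ext x; rfl

lemma norm_smulCLE_le (c : ℝ) (hc : c ≠ 0) :
    ‖((smulCLE c hc : E ≃L[ℝ] E) : E →L[ℝ] E)‖ ≤ |c| := by
  refine ContinuousLinearMap.opNorm_le_bound _ (abs_nonneg c) fun x => ?_
  have h1 : (↑(smulCLE c hc (E := E)) : E →L[ℝ] E) x = c • x := by
    rw [smulCLE_coe]; simp
  rw [h1, norm_smul, Real.norm_eq_abs]


variable {m : ℕ}

local notation "Em" => EuclideanSpace ℝ (Fin m)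

lemma contDiffOn_norm' : ContDiffOn ℝ ((⊤ : ℕ∞) : WithTop ℕ∞) (fun x : Em => ‖x‖) ({0}ᶜ : Set Em) :=
  fun x hx => (contDiffAt_norm ℝ (by simpa using hx)).contDiffWithinAt

lemma uniqueDiffOn_compl : UniqueDiffOn ℝ ({0}ᶜ : Set Em) :=
  isOpen_compl_singleton.uniqueDiffOn

lemma norm_deriv_bound (i : ℕ) :
    ∃ B ≥ 0, ∀ ξ : EuclideanSpace ℝ (Fin m), ξ ≠ 0 →
      ‖iteratedFDerivWithin ℝ i (fun x : EuclideanSpace ℝ (Fin m) => ‖x‖) {0}ᶜ ξ‖ ≤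
        B * ‖ξ‖ * ‖ξ‖⁻¹ ^ i := by
  have hsub : Metric.sphere (0 : Em) 1 ⊆ ({0}ᶜ : Set Em) := by
    intro x hx
    simp only [Metric.mem_sphere, _root_.dist_zero_right] at hx
    simp only [Set.mem_compl_iff, Set.mem_singleton_iff]
    intro h; rw [h] at hx; simp at hx
  have hcont : ContinuousOn
      (fun η : Em => ‖iteratedFDerivWithin ℝ i (fun x : Em => ‖x‖) {0}ᶜ η‖) ({0}ᶜ : Set Em) :=
    (contDiffOn_norm'.continuousOn_iteratedFDerivWithin (by exact_mod_cast le_top) uniqueDiffOn_compl).norm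
  obtain ⟨B0, hB0⟩ := (isCompact_sphere (0 : Em) 1).exists_bound_of_continuousOn
    (hcont.mono hsub)
  refine ⟨max B0 0, le_max_right _ _, fun ξ hξ => ?_⟩
  have hc : (0:ℝ) < ‖ξ‖ := norm_pos_iff.2 hξ
  set c : ℝ := ‖ξ‖ with hcdef
  have hcinv : c⁻¹ ≠ 0 := inv_ne_zero hc.ne'
  set η : Em := c⁻¹ • ξ with hηdef
  have hη1 : ‖η‖ = 1 := by
    rw [hηdef, norm_smul, Real.norm_eq_abs, abs_of_pos (inv_pos.2 hc)]
    exact inv_mul_cancel₀ hc.ne'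
  have hηs : η ∈ ({0}ᶜ : Set Em) := by
    simp only [Set.mem_compl_iff, Set.mem_singleton_iff]
    intro h; rw [h] at hη1; simp at hη1
  set g : Em ≃L[ℝ] Em := smulCLE c⁻¹ hcinv with hgdef
  have hpre : (⇑g) ⁻¹' ({0}ᶜ : Set Em) = ({0}ᶜ : Set Em) := by
    ext x
    simp only [Set.mem_preimage, Set.mem_compl_iff, Set.mem_singleton_iff, hgdef, smulCLE_apply,
      smul_eq_zero, hcinv, false_or]
  have hgξ : g ξ ∈ ({0}ᶜ : Set Em) := by
    simp only [hgdef, smulCLE_apply]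
    exact hηs
  have key := g.iteratedFDerivWithin_comp_right (fun x : Em => ‖x‖) uniqueDiffOn_compl hgξ i
  rw [hpre] at key
  have hcomp : ((fun x : Em => ‖x‖) ∘ ⇑g) = c⁻¹ • (fun x : Em => ‖x‖) := by
    funext y
    simp only [Function.comp_apply, hgdef, smulCLE_apply, Pi.smul_apply, smul_eq_mul,
      norm_smul, Real.norm_eq_abs, abs_of_pos (inv_pos.2 hc)]
  rw [hcomp] at key
  have hsmul : iteratedFDerivWithin ℝ i (c⁻¹ • (fun x : Em => ‖x‖)) {0}ᶜ ξ
      = c⁻¹ • iteratedFDerivWithin ℝ i (fun x : Em => ‖x‖) {0}ᶜ ξ :=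
    iteratedFDerivWithin_const_smul_apply ((contDiffOn_norm'.of_le (by exact_mod_cast le_top) : ContDiffOn ℝ (i : WithTop ℕ∞) _ _) ξ (by simpa using hξ)) uniqueDiffOn_compl
      (by simpa using hξ)
  rw [hsmul] at key
  -- key : c⁻¹ • T_ξ = (T_η).compCLM g
  have hTξ : iteratedFDerivWithin ℝ i (fun x : Em => ‖x‖) {0}ᶜ ξ
      = c • ((iteratedFDerivWithin ℝ i (fun x : Em => ‖x‖) {0}ᶜ (g ξ)).compContinuousLinearMap
          fun _ => (g : Em →L[ℝ] Em)) := by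
    rw [← key, smul_smul, mul_inv_cancel₀ hc.ne', one_smul]
  rw [hTξ, norm_smul, Real.norm_eq_abs, abs_of_pos hc]
  have hBη : ‖iteratedFDerivWithin ℝ i (fun x : Em => ‖x‖) {0}ᶜ (g ξ)‖ ≤ max B0 0 := by
    have : g ξ ∈ Metric.sphere (0 : Em) 1 := by
      simp only [Metric.mem_sphere, _root_.dist_zero_right]
      show ‖η‖ = 1
      exact hη1
    have h2 := hB0 _ this
    rw [Real.norm_eq_abs, abs_of_nonneg (norm_nonneg _)] at h2
    exact le_trans h2 (le_max_left _ _)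
  calc c * ‖(iteratedFDerivWithin ℝ i (fun x : Em => ‖x‖) {0}ᶜ (g ξ)).compContinuousLinearMap
          fun _ => (g : Em →L[ℝ] Em)‖
      ≤ c * (‖iteratedFDerivWithin ℝ i (fun x : Em => ‖x‖) {0}ᶜ (g ξ)‖ *
          ∏ _j : Fin i, ‖(g : Em →L[ℝ] Em)‖) := by
        exact mul_le_mul_of_nonneg_left
          (ContinuousMultilinearMap.norm_compContinuousLinearMap_le _ _) hc.le
    _ ≤ c * (max B0 0 * (c⁻¹) ^ i) := by
        refine mul_le_mul_of_nonneg_left ?_ hc.le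
        refine mul_le_mul hBη ?_ (Finset.prod_nonneg fun _ _ => norm_nonneg _)
          (le_max_right _ _)
        calc (∏ _j : Fin i, ‖(g : Em →L[ℝ] Em)‖) = ‖(g : Em →L[ℝ] Em)‖ ^ i := by
              rw [Finset.prod_const, Finset.card_univ, Fintype.card_fin]
          _ ≤ (c⁻¹) ^ i := by
              refine pow_le_pow_left₀ (norm_nonneg _) ?_ i
              have := norm_smulCLE_le (E := Em) c⁻¹ hcinv
              rwa [abs_of_pos (inv_pos.2 hc)] at this
    _ = max B0 0 * c * c⁻¹ ^ i := by ring


/-- Bound on iterated derivatives of `Inv.inv` at points `≥ 1`. -/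
lemma inv_deriv_bound {y : ℝ} (hy : 1 ≤ y) (i j : ℕ) (hj : j ≤ i) :
    ‖iteratedFDerivWithin ℝ j (Inv.inv : ℝ → ℝ) {0}ᶜ y‖ ≤ (i ! : ℝ) := by
  have hy0 : y ≠ 0 := by linarith
  rw [iteratedFDerivWithin_of_isOpen j isOpen_compl_singleton (by simpa using hy0),
    norm_iteratedFDeriv_eq_norm_iteratedDeriv, iteratedDeriv_eq_iterate, iter_deriv_inv]
  rw [Real.norm_eq_abs, abs_mul, abs_mul, abs_pow, abs_neg, abs_one, one_pow, one_mul, Nat.abs_cast]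
  have h1 : ∀ k ∈ Finset.range j, |(-1 - (k:ℝ))| = (k:ℝ) + 1 := by
    intro k _
    have hk : (0:ℝ) ≤ (k:ℝ) := Nat.cast_nonneg k
    rw [abs_of_nonpos (by linarith)]
    ring
  have h2 : (∏ k ∈ Finset.range j, ((k:ℝ) + 1)) = (j ! : ℝ) := by
    rw [← Finset.prod_range_add_one_eq_factorial, Nat.cast_prod]
    push_cast
    rfl
  have h3 : |y ^ (-1 - (j:ℤ))| ≤ 1 := by
    rw [abs_of_nonneg (zpow_nonneg (by linarith) _)]
    exact zpow_le_one_of_nonpos₀ hy (by omega)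
  calc (j ! : ℝ) * |y ^ (-1 - (j:ℤ))| ≤ (j ! : ℝ) * 1 :=
        mul_le_mul_of_nonneg_left h3 (by positivity)
    _ = (j ! : ℝ) := mul_one _
    _ ≤ (i ! : ℝ) := by exact_mod_cast Nat.factorial_le hj


lemma contDiff_exp_mul (c : ℝ) {N : WithTop ℕ∞} : ContDiff ℝ N fun t : ℝ => Real.exp (c * t) :=
  Real.contDiff_exp.comp (contDiff_const.mul contDiff_id)

lemma exp_deriv_norm (c : ℝ) (k : ℕ) (t : ℝ) :
    ‖iteratedFDeriv ℝ k (fun s : ℝ => Real.exp (c * s)) t‖ = |c| ^ k * Real.exp (c * t) := by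
  rw [norm_iteratedFDeriv_eq_norm_iteratedDeriv, iteratedDeriv_exp_const_mul]
  rw [Real.norm_eq_abs, abs_mul, abs_pow, Real.abs_exp]

lemma u_bound {d : ℝ} (hd : 0 < d) (j : ℕ) {t : ℝ} (ht : 0 ≤ t) :
    ‖iteratedFDeriv ℝ j (fun t : ℝ => (1 + Real.exp (-2 * d * t))⁻¹) t‖ ≤
      (j ! : ℝ) * (j ! : ℝ) * (max 1 (2 * d)) ^ j := by
  have hexp : ∀ s : ℝ, (0:ℝ) < 1 + Real.exp (-2 * d * s) := fun s => by positivity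
  have hp : ContDiff ℝ (j : WithTop ℕ∞) (fun t : ℝ => 1 + Real.exp (-2 * d * t)) :=
    contDiff_const.add (contDiff_exp_mul (-2 * d))
  have hmaps : Set.MapsTo (fun t : ℝ => 1 + Real.exp (-2 * d * t)) Set.univ ({0}ᶜ : Set ℝ) :=
    fun y _ => by
      simp only [Set.mem_compl_iff, Set.mem_singleton_iff]
      exact (hexp y).ne'
  have hC : ∀ i, i ≤ j →
      ‖iteratedFDerivWithin ℝ i (Inv.inv : ℝ → ℝ) {0}ᶜ
        ((fun t : ℝ => 1 + Real.exp (-2 * d * t)) t)‖ ≤ (j ! : ℝ) := by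
    intro i hi
    refine inv_deriv_bound ?_ j i hi
    have := Real.exp_pos (-2 * d * t)
    simp only
    linarith
  have hD : ∀ i, 1 ≤ i → i ≤ j →
      ‖iteratedFDerivWithin ℝ i (fun t : ℝ => 1 + Real.exp (-2 * d * t)) Set.univ t‖ ≤
        (max 1 (2 * d)) ^ i := by
    intro i h1 h2
    rw [iteratedFDerivWithin_univ, norm_iteratedFDeriv_eq_norm_iteratedDeriv]
    have hconst : iteratedDeriv i (fun z : ℝ => 1 + Real.exp (-2 * d * z)) t
        = iteratedDeriv i (fun z : ℝ => Real.exp (-2 * d * z)) t := by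
      simp only [← iteratedDerivWithin_univ]
      exact iteratedDerivWithin_const_add (by omega) 1
    rw [hconst, iteratedDeriv_exp_const_mul]
    rw [Real.norm_eq_abs, abs_mul, abs_pow, Real.abs_exp]
    have habs : |(-2 * d)| = 2 * d := by
      rw [abs_of_nonpos (by linarith)]; ring
    rw [habs]
    have he1 : Real.exp (-2 * d * t) ≤ 1 := by
      rw [Real.exp_le_one_iff]
      nlinarith
    calc (2 * d) ^ i * Real.exp (-2 * d * t) ≤ (2 * d) ^ i * 1 :=
          mul_le_mul_of_nonneg_left he1 (by positivity)
      _ = (2 * d) ^ i := mul_one _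
      _ ≤ (max 1 (2 * d)) ^ i := pow_le_pow_left₀ (by positivity) (le_max_right _ _) i
  have main := norm_iteratedFDerivWithin_comp_le (𝕜 := ℝ) (g := (Inv.inv : ℝ → ℝ))
    (f := fun t : ℝ => 1 + Real.exp (-2 * d * t)) (s := Set.univ) (t := ({0}ᶜ : Set ℝ))
    (n := j) (N := (j : WithTop ℕ∞)) (contDiffOn_inv ℝ) hp.contDiffOn le_rfl
    isOpen_compl_singleton.uniqueDiffOn uniqueDiffOn_univ hmaps (Set.mem_univ t) hC hD
  rw [iteratedFDerivWithin_univ] at main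
  have hcomp : ((Inv.inv : ℝ → ℝ) ∘ fun t : ℝ => 1 + Real.exp (-2 * d * t))
      = fun t : ℝ => (1 + Real.exp (-2 * d * t))⁻¹ := rfl
  rw [hcomp] at main
  exact main

lemma w_bound {d : ℝ} (hd : 0 < d) (n j : ℕ) (hj : j ≤ n) {t : ℝ} (ht : 0 ≤ t) :
    ‖iteratedFDeriv ℝ j
        (fun t : ℝ => Real.exp (-2 * d * t) * (1 + Real.exp (-2 * d * t))⁻¹) t‖ ≤
      (2 ^ n * (max 1 (2 * d)) ^ n * ((n ! : ℝ) * (n ! : ℝ) * (max 1 (2 * d)) ^ n)) *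
        Real.exp (-2 * d * t) := by
  have hD1 : (1:ℝ) ≤ max 1 (2 * d) := le_max_left _ _
  have hu : ContDiff ℝ (j : WithTop ℕ∞) (fun t : ℝ => (1 + Real.exp (-2 * d * t))⁻¹) :=
    (contDiff_const.add (contDiff_exp_mul (-2 * d))).inv (fun x => by positivity)
  have main := norm_iteratedFDeriv_mul_le (𝕜 := ℝ) (N := (j : WithTop ℕ∞))
    (contDiff_exp_mul (-2 * d)) hu t le_rfl
  refine le_trans main ?_
  have hterm : ∀ i ∈ Finset.range (j + 1),
      (j.choose i : ℝ) * ‖iteratedFDeriv ℝ i (fun s : ℝ => Real.exp (-2 * d * s)) t‖ *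
        ‖iteratedFDeriv ℝ (j - i) (fun t : ℝ => (1 + Real.exp (-2 * d * t))⁻¹) t‖ ≤
      (j.choose i : ℝ) * ((max 1 (2 * d)) ^ n * Real.exp (-2 * d * t) *
        ((n ! : ℝ) * (n ! : ℝ) * (max 1 (2 * d)) ^ n)) := by
    intro i hi
    have hij : i ≤ j := by
      have := Finset.mem_range.1 hi; omega
    have e1 : ‖iteratedFDeriv ℝ i (fun s : ℝ => Real.exp (-2 * d * s)) t‖
        = (2 * d) ^ i * Real.exp (-2 * d * t) := by
      rw [exp_deriv_norm]
      congr 2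
      rw [abs_of_nonpos (by linarith)]; ring
    have e2 : (2 * d) ^ i ≤ (max 1 (2 * d)) ^ n :=
      le_trans (pow_le_pow_left₀ (by positivity) (le_max_right _ _) i)
        (pow_le_pow_right₀ hD1 (le_trans hij hj))
    have e3 : ‖iteratedFDeriv ℝ (j - i) (fun t : ℝ => (1 + Real.exp (-2 * d * t))⁻¹) t‖ ≤
        (n ! : ℝ) * (n ! : ℝ) * (max 1 (2 * d)) ^ n := by
      refine le_trans (u_bound hd (j - i) ht) ?_
      have hfact : ((j - i)! : ℝ) ≤ (n ! : ℝ) := by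
        exact_mod_cast Nat.factorial_le (by omega)
      have hpow : (max 1 (2 * d)) ^ (j - i) ≤ (max 1 (2 * d)) ^ n :=
        pow_le_pow_right₀ hD1 (by omega)
      have h0 : (0:ℝ) ≤ ((j - i)! : ℝ) := by positivity
      have h1 : (0:ℝ) ≤ (max 1 (2 * d)) ^ (j - i) := by positivity
      calc ((j-i)! : ℝ) * ((j-i)! : ℝ) * (max 1 (2 * d)) ^ (j - i)
          ≤ (n ! : ℝ) * (n ! : ℝ) * (max 1 (2 * d)) ^ (j - i) := by
            refine mul_le_mul_of_nonneg_right (mul_le_mul hfact hfact h0 (by positivity)) h1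
        _ ≤ (n ! : ℝ) * (n ! : ℝ) * (max 1 (2 * d)) ^ n := by
            refine mul_le_mul_of_nonneg_left hpow (by positivity)
    calc (j.choose i : ℝ) * ‖iteratedFDeriv ℝ i (fun s : ℝ => Real.exp (-2 * d * s)) t‖ *
          ‖iteratedFDeriv ℝ (j - i) (fun t : ℝ => (1 + Real.exp (-2 * d * t))⁻¹) t‖
        ≤ (j.choose i : ℝ) * ((max 1 (2 * d)) ^ n * Real.exp (-2 * d * t)) *
          ((n ! : ℝ) * (n ! : ℝ) * (max 1 (2 * d)) ^ n) := by
          refine mul_le_mul ?_ e3 (norm_nonneg _) (by positivity)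
          rw [e1]
          refine mul_le_mul_of_nonneg_left ?_ (by positivity)
          exact mul_le_mul_of_nonneg_right e2 (Real.exp_pos _).le
      _ = (j.choose i : ℝ) * ((max 1 (2 * d)) ^ n * Real.exp (-2 * d * t) *
          ((n ! : ℝ) * (n ! : ℝ) * (max 1 (2 * d)) ^ n)) := by ring
  refine le_trans (Finset.sum_le_sum hterm) ?_
  rw [← Finset.sum_mul]
  have hsum : (∑ i ∈ Finset.range (j + 1), (j.choose i : ℝ)) = (2 : ℝ) ^ j := by
    rw [← Nat.cast_sum]
    rw [Nat.sum_range_choose]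
    push_cast
    rfl
  rw [hsum]
  have h2j : (2:ℝ) ^ j ≤ 2 ^ n := pow_le_pow_right₀ (by norm_num) hj
  calc (2:ℝ) ^ j * ((max 1 (2 * d)) ^ n * Real.exp (-2 * d * t) *
        ((n ! : ℝ) * (n ! : ℝ) * (max 1 (2 * d)) ^ n))
      ≤ (2:ℝ) ^ n * ((max 1 (2 * d)) ^ n * Real.exp (-2 * d * t) *
        ((n ! : ℝ) * (n ! : ℝ) * (max 1 (2 * d)) ^ n)) := by
        refine mul_le_mul_of_nonneg_right h2j (by positivity)
    _ = (2 ^ n * (max 1 (2 * d)) ^ n * ((n ! : ℝ) * (n ! : ℝ) * (max 1 (2 * d)) ^ n)) *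
        Real.exp (-2 * d * t) := by ring

end Stmt4Aux

open Stmt4Aux

/-- Symbol estimate for `ξ ↦ (1 + e^{-2d‖ξ‖})^{-1}`: there is `C > 0` (depending on
`n` and `d`) such that for every `ξ ≠ 0`, `‖D^n h(ξ)‖ ≤ C·‖ξ‖^{-n}`. -/
theorem stmt_4 (m n : ℕ) (hm : 1 ≤ m) (d : ℝ) (hd : 0 < d) :
    ∃ C > 0, ∀ ξ : EuclideanSpace ℝ (Fin m), ξ ≠ 0 →
      ‖iteratedFDeriv ℝ n
          (fun ξ : EuclideanSpace ℝ (Fin m) => (1 + Real.exp (-2 * d * ‖ξ‖))⁻¹) ξ‖ ≤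
        C * ‖ξ‖ ^ (-(n : ℤ)) := by
  rcases Nat.eq_zero_or_pos n with hn0 | hn1
  · subst hn0
    refine ⟨1, one_pos, fun ξ hξ => ?_⟩
    rw [norm_iteratedFDeriv_zero]
    simp only [Nat.cast_zero, neg_zero, zpow_zero, mul_one]
    have he : (0:ℝ) < Real.exp (-2 * d * ‖ξ‖) := Real.exp_pos _
    rw [Real.norm_eq_abs, abs_of_pos (by positivity)]
    exact inv_le_one_of_one_le₀ (by linarith)
  · obtain ⟨B, hB0, hB⟩ : ∃ B : ℕ → ℝ, (∀ i, 0 ≤ B i) ∧ ∀ i,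
        ∀ ξ : EuclideanSpace ℝ (Fin m), ξ ≠ 0 →
        ‖iteratedFDerivWithin ℝ i (fun x : EuclideanSpace ℝ (Fin m) => ‖x‖) {0}ᶜ ξ‖ ≤
          B i * ‖ξ‖ * ‖ξ‖⁻¹ ^ i := by
      choose B h1 h2 using fun i => norm_deriv_bound (m := m) i
      exact ⟨B, h1, h2⟩
    have hD1 : (1:ℝ) ≤ max 1 (2 * d) := le_max_left _ _
    have hA1 : (1:ℝ) ≤ max 1 (∑ i ∈ Finset.range (n+1), B i) := le_max_left _ _
    refine ⟨(n ! : ℝ) * ((2:ℝ) ^ n * (max 1 (2 * d)) ^ n *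
        ((n ! : ℝ) * (n ! : ℝ) * (max 1 (2 * d)) ^ n)) *
        (max 1 (∑ i ∈ Finset.range (n+1), B i)) ^ n *
        (1 + (n ! : ℝ) / (2 * d) ^ n), by positivity, fun ξ hξ => ?_⟩
    have hc : (0:ℝ) < ‖ξ‖ := norm_pos_iff.2 hξ
    have hξs : ξ ∈ ({0}ᶜ : Set (EuclideanSpace ℝ (Fin m))) := by simpa using hξ
    have hfun : (fun ξ : EuclideanSpace ℝ (Fin m) => (1 + Real.exp (-2 * d * ‖ξ‖))⁻¹)
        = (fun _ : EuclideanSpace ℝ (Fin m) => (1:ℝ)) +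
          (-((fun t : ℝ => Real.exp (-2 * d * t) * (1 + Real.exp (-2 * d * t))⁻¹) ∘
              (fun x : EuclideanSpace ℝ (Fin m) => ‖x‖))) := by
      funext x
      have h0 : (0:ℝ) < 1 + Real.exp (-2 * d * ‖x‖) := by positivity
      simp only [Pi.add_apply, Pi.neg_apply, Function.comp_apply]
      field_simp
      ring
    have hw : ContDiff ℝ ((⊤:ℕ∞) : WithTop ℕ∞)
        (fun t : ℝ => Real.exp (-2 * d * t) * (1 + Real.exp (-2 * d * t))⁻¹) :=
      (contDiff_exp_mul _).mul
        ((contDiff_const.add (contDiff_exp_mul _)).inv fun x => by positivity)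
    have hWs : ContDiffOn ℝ (n : WithTop ℕ∞)
        ((fun t : ℝ => Real.exp (-2 * d * t) * (1 + Real.exp (-2 * d * t))⁻¹) ∘
          (fun x : EuclideanSpace ℝ (Fin m) => ‖x‖)) {0}ᶜ :=
      (hw.of_le (by exact_mod_cast le_top)).comp_contDiffOn
        (contDiffOn_norm'.of_le (by exact_mod_cast le_top))
    have hiter : iteratedFDeriv ℝ n
        (fun ξ : EuclideanSpace ℝ (Fin m) => (1 + Real.exp (-2 * d * ‖ξ‖))⁻¹) ξ
        = - iteratedFDerivWithin ℝ n
            ((fun t : ℝ => Real.exp (-2 * d * t) * (1 + Real.exp (-2 * d * t))⁻¹) ∘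
              (fun x : EuclideanSpace ℝ (Fin m) => ‖x‖)) {0}ᶜ ξ := by
      rw [hfun]
      rw [← iteratedFDerivWithin_of_isOpen (𝕜 := ℝ) n isOpen_compl_singleton hξs]
      have hadd : iteratedFDerivWithin ℝ n
          ((fun _ : EuclideanSpace ℝ (Fin m) => (1:ℝ)) +
            (-((fun t : ℝ => Real.exp (-2 * d * t) * (1 + Real.exp (-2 * d * t))⁻¹) ∘
              (fun x : EuclideanSpace ℝ (Fin m) => ‖x‖)))) {0}ᶜ ξ
          = iteratedFDerivWithin ℝ n (fun _ : EuclideanSpace ℝ (Fin m) => (1:ℝ)) {0}ᶜ ξ +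
            iteratedFDerivWithin ℝ n
              (-((fun t : ℝ => Real.exp (-2 * d * t) * (1 + Real.exp (-2 * d * t))⁻¹) ∘
                (fun x : EuclideanSpace ℝ (Fin m) => ‖x‖))) {0}ᶜ ξ :=
        iteratedFDerivWithin_add_apply (contDiffOn_const ξ hξs) (by exact hWs.neg ξ hξs)
          uniqueDiffOn_compl hξs
      rw [hadd]
      rw [iteratedFDerivWithin_const_of_ne hn1.ne' 1 {0}ᶜ, Pi.zero_apply,
        iteratedFDerivWithin_neg_apply uniqueDiffOn_compl hξs, zero_add]
    rw [hiter, norm_neg]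
    have hC : ∀ i, i ≤ n →
        ‖iteratedFDerivWithin ℝ i
            (fun t : ℝ => Real.exp (-2 * d * t) * (1 + Real.exp (-2 * d * t))⁻¹) Set.univ
            ((fun x : EuclideanSpace ℝ (Fin m) => ‖x‖) ξ)‖ ≤
          ((2:ℝ) ^ n * (max 1 (2 * d)) ^ n *
            ((n ! : ℝ) * (n ! : ℝ) * (max 1 (2 * d)) ^ n)) * Real.exp (-2 * d * ‖ξ‖) := by
      intro i hi
      rw [iteratedFDerivWithin_univ]
      exact w_bound hd n i hi (norm_nonneg ξ)
    have hD : ∀ i, 1 ≤ i → i ≤ n →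
        ‖iteratedFDerivWithin ℝ i (fun x : EuclideanSpace ℝ (Fin m) => ‖x‖) {0}ᶜ ξ‖ ≤
          ((max 1 (∑ i ∈ Finset.range (n+1), B i)) * max 1 ‖ξ‖ * ‖ξ‖⁻¹) ^ i := by
      intro i h1 h2
      refine le_trans (hB i ξ hξ) ?_
      have hBi : B i ≤ max 1 (∑ i ∈ Finset.range (n+1), B i) :=
        le_trans (Finset.single_le_sum (fun k _ => hB0 k) (Finset.mem_range.2 (by omega)))
          (le_max_right _ _)
      have step1 : B i * ‖ξ‖ ≤ (max 1 (∑ i ∈ Finset.range (n+1), B i)) ^ i * (max 1 ‖ξ‖) ^ i := by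
        calc B i * ‖ξ‖ ≤ (max 1 (∑ i ∈ Finset.range (n+1), B i)) * max 1 ‖ξ‖ :=
              mul_le_mul hBi (le_max_right _ _) hc.le (by positivity)
          _ ≤ (max 1 (∑ i ∈ Finset.range (n+1), B i)) ^ i * (max 1 ‖ξ‖) ^ i :=
              mul_le_mul (le_self_pow₀ hA1 (by omega))
                (le_self_pow₀ (le_max_left _ _) (by omega)) (by positivity) (by positivity)
      calc B i * ‖ξ‖ * ‖ξ‖⁻¹ ^ i
          ≤ ((max 1 (∑ i ∈ Finset.range (n+1), B i)) ^ i * (max 1 ‖ξ‖) ^ i) * ‖ξ‖⁻¹ ^ i :=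
            mul_le_mul_of_nonneg_right step1 (by positivity)
        _ = ((max 1 (∑ i ∈ Finset.range (n+1), B i)) * max 1 ‖ξ‖ * ‖ξ‖⁻¹) ^ i := by
            rw [mul_pow, mul_pow]
    have main := norm_iteratedFDerivWithin_comp_le (𝕜 := ℝ)
      (g := fun t : ℝ => Real.exp (-2 * d * t) * (1 + Real.exp (-2 * d * t))⁻¹)
      (f := fun x : EuclideanSpace ℝ (Fin m) => ‖x‖)
      (s := ({0}ᶜ : Set (EuclideanSpace ℝ (Fin m)))) (t := Set.univ) (n := n)
      (N := ((⊤:ℕ∞) : WithTop ℕ∞))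
      hw.contDiffOn contDiffOn_norm' (by exact_mod_cast le_top)
      uniqueDiffOn_univ uniqueDiffOn_compl (Set.mapsTo_univ _ _) hξs hC hD
    refine le_trans main ?_
    have hzpow : ‖ξ‖ ^ (-(n:ℤ)) = (‖ξ‖⁻¹) ^ n := by
      rw [zpow_neg, zpow_natCast, inv_pow]
    rw [hzpow]
    -- final arithmetic
    have hX : (max 1 ‖ξ‖) ^ n ≤ 1 + ‖ξ‖ ^ n := by
      rcases le_total ‖ξ‖ 1 with h | h
      · rw [max_eq_left h, one_pow]
        have : (0:ℝ) ≤ ‖ξ‖ ^ n := by positivity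
        linarith
      · rw [max_eq_right h]
        linarith [one_pos (α := ℝ)]
    have hkey : Real.exp (-2 * d * ‖ξ‖) * ‖ξ‖ ^ n ≤ (n ! : ℝ) / (2 * d) ^ n := by
      rw [le_div_iff₀ (by positivity)]
      have h1 := Real.pow_div_factorial_le_exp (x := 2 * d * ‖ξ‖) (by positivity) n
      rw [div_le_iff₀ (by positivity)] at h1
      have hee : Real.exp (-2 * d * ‖ξ‖) * Real.exp (2 * d * ‖ξ‖) = 1 := by
        rw [← Real.exp_add, show -2 * d * ‖ξ‖ + 2 * d * ‖ξ‖ = 0 by ring, Real.exp_zero]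
      calc Real.exp (-2 * d * ‖ξ‖) * ‖ξ‖ ^ n * (2 * d) ^ n
          = Real.exp (-2 * d * ‖ξ‖) * (2 * d * ‖ξ‖) ^ n := by rw [mul_pow]; ring
        _ ≤ Real.exp (-2 * d * ‖ξ‖) * (Real.exp (2 * d * ‖ξ‖) * (n ! : ℝ)) :=
            mul_le_mul_of_nonneg_left h1 (Real.exp_pos _).le
        _ = (Real.exp (-2 * d * ‖ξ‖) * Real.exp (2 * d * ‖ξ‖)) * (n ! : ℝ) := by ring
        _ = (n ! : ℝ) := by rw [hee, one_mul]
    have he1 : Real.exp (-2 * d * ‖ξ‖) ≤ 1 := by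
      rw [Real.exp_le_one_iff]
      nlinarith
    have hQ : Real.exp (-2 * d * ‖ξ‖) * (max 1 ‖ξ‖) ^ n ≤ 1 + (n ! : ℝ) / (2 * d) ^ n := by
      calc Real.exp (-2 * d * ‖ξ‖) * (max 1 ‖ξ‖) ^ n
          ≤ Real.exp (-2 * d * ‖ξ‖) * (1 + ‖ξ‖ ^ n) :=
            mul_le_mul_of_nonneg_left hX (Real.exp_pos _).le
        _ = Real.exp (-2 * d * ‖ξ‖) + Real.exp (-2 * d * ‖ξ‖) * ‖ξ‖ ^ n := by ring
        _ ≤ 1 + (n ! : ℝ) / (2 * d) ^ n := add_le_add he1 hkey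
    calc (n ! : ℝ) * (((2:ℝ) ^ n * (max 1 (2 * d)) ^ n *
            ((n ! : ℝ) * (n ! : ℝ) * (max 1 (2 * d)) ^ n)) * Real.exp (-2 * d * ‖ξ‖)) *
          ((max 1 (∑ i ∈ Finset.range (n+1), B i)) * max 1 ‖ξ‖ * ‖ξ‖⁻¹) ^ n
        = ((n ! : ℝ) * ((2:ℝ) ^ n * (max 1 (2 * d)) ^ n *
            ((n ! : ℝ) * (n ! : ℝ) * (max 1 (2 * d)) ^ n)) *
            (max 1 (∑ i ∈ Finset.range (n+1), B i)) ^ n) *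
          (Real.exp (-2 * d * ‖ξ‖) * (max 1 ‖ξ‖) ^ n) * (‖ξ‖⁻¹) ^ n := by
          rw [mul_pow, mul_pow]; ring
      _ ≤ ((n ! : ℝ) * ((2:ℝ) ^ n * (max 1 (2 * d)) ^ n *
            ((n ! : ℝ) * (n ! : ℝ) * (max 1 (2 * d)) ^ n)) *
            (max 1 (∑ i ∈ Finset.range (n+1), B i)) ^ n) *
          (1 + (n ! : ℝ) / (2 * d) ^ n) * (‖ξ‖⁻¹) ^ n := by
          refine mul_le_mul_of_nonneg_right (mul_le_mul_of_nonneg_left hQ (by positivity))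
            (by positivity)
      _ = (n ! : ℝ) * ((2:ℝ) ^ n * (max 1 (2 * d)) ^ n *
            ((n ! : ℝ) * (n ! : ℝ) * (max 1 (2 * d)) ^ n)) *
            (max 1 (∑ i ∈ Finset.range (n+1), B i)) ^ n *
          (1 + (n ! : ℝ) / (2 * d) ^ n) * (‖ξ‖⁻¹) ^ n := by ring

end
end

section
/- Let N ≥ 2 and let F = (F₁, …, F_N) with each F_j : ℝ^N → ℂ smooth and compactly supported, and suppose F_j(x', −x_N) = F_j(x', x_N) for j = 1, …, N − 1 and F_N(x', −x_N) = −F_N(x', x_N) for all (x', x_N) ∈ ℝ^{N−1} × ℝ. Define v(x) = −(2π)^{-N} ∫_{ℝ^N} e^{i x·ξ}·‖ξ‖^{-2}·(Σ_{j=1}^N i ξ_j·𝓕F_j(ξ)) dξ, where 𝓕F_j(ξ) = ∫_{ℝ^N} e^{-i x·ξ} F_j(x) dx. Then v(x', −x_N) = v(x', x_N) for all (x', x_N) ∈ ℝ^{N−1} × ℝ, and consequently ∂v/∂x_N (x', 0) = 0 for every x' ∈ ℝ^{N−1}. -/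
open MeasureTheory
open scoped BigOperators

/-- The Fourier transform `𝓕f(ξ) = ∫ e^{-i x·ξ} f(x) dx` on `ℝ^N`. -/
noncomputable def fourierT {N : ℕ} (f : EuclideanSpace ℝ (Fin N) → ℂ)
    (ξ : EuclideanSpace ℝ (Fin N)) : ℂ :=
  ∫ x : EuclideanSpace ℝ (Fin N), Complex.exp (-Complex.I * ((inner ℝ x ξ : ℝ) : ℂ)) * f x

/-- The integrand of the Newtonian potential. -/
noncomputable def potentialIntegrand {N : ℕ} (F : Fin N → EuclideanSpace ℝ (Fin N) → ℂ)
    (x ξ : EuclideanSpace ℝ (Fin N)) : ℂ :=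
  Complex.exp (Complex.I * ((inner ℝ x ξ : ℝ) : ℂ)) * ((‖ξ‖ ^ 2 : ℝ) : ℂ)⁻¹ *
    ∑ j, Complex.I * (ξ j : ℂ) * fourierT (F j) ξ

/-- The Newtonian potential `v(x) = -(2π)^{-N} ∫ e^{i x·ξ}‖ξ‖^{-2} Σ_j iξ_j 𝓕F_j(ξ) dξ`. -/
noncomputable def newtonianPotential {N : ℕ} (F : Fin N → EuclideanSpace ℝ (Fin N) → ℂ)
    (x : EuclideanSpace ℝ (Fin N)) : ℂ :=
  -((((2 * Real.pi) ^ N)⁻¹ : ℝ) : ℂ) * ∫ ξ, potentialIntegrand F x ξ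

/-- The index of the last coordinate in `ℝ^N`. -/
def lastIdx (N : ℕ) (hN : 2 ≤ N) : Fin N := ⟨N - 1, by omega⟩

/-- The reflection `(x', x_N) ↦ (x', -x_N)` negating the last coordinate of `ℝ^N`. -/
noncomputable def reflectLast (N : ℕ) (hN : 2 ≤ N) (x : EuclideanSpace ℝ (Fin N)) :
    EuclideanSpace ℝ (Fin N) :=
  x - (2 * x (lastIdx N hN)) • EuclideanSpace.single (lastIdx N hN) 1

/-! ### Auxiliary lemmas -/

/-- The reflection as a linear isometry equivalence. -/
noncomputable def reflIso (N : ℕ) (hN : 2 ≤ N) :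
    EuclideanSpace ℝ (Fin N) ≃ₗᵢ[ℝ] EuclideanSpace ℝ (Fin N) :=
  Submodule.reflection (ℝ ∙ (EuclideanSpace.single (lastIdx N hN) (1 : ℝ)))ᗮ

lemma reflIso_eq (N : ℕ) (hN : 2 ≤ N) (x : EuclideanSpace ℝ (Fin N)) :
    reflIso N hN x = reflectLast N hN x := by
  have h1 : ‖EuclideanSpace.single (lastIdx N hN) (1 : ℝ)‖ = 1 := by
    simp [EuclideanSpace.norm_single]
  rw [reflIso, Submodule.reflection_apply, Submodule.starProjection_orthogonal_val,
    Submodule.starProjection_singleton, EuclideanSpace.inner_single_left, h1, reflectLast]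
  simp only [map_one, one_pow, algebraMap.coe_one, div_one, one_mul, two_smul]
  module

lemma reflectLast_apply (N : ℕ) (hN : 2 ≤ N) (x : EuclideanSpace ℝ (Fin N)) (j : Fin N) :
    reflectLast N hN x j = if j = lastIdx N hN then -x j else x j := by
  simp only [reflectLast, PiLp.sub_apply, PiLp.smul_apply, EuclideanSpace.single_apply,
    smul_eq_mul]
  split <;> rename_i h
  · subst h; ring
  · simp

lemma inner_refl (N : ℕ) (hN : 2 ≤ N) (x ξ : EuclideanSpace ℝ (Fin N)) :
    (inner ℝ (reflectLast N hN x) (reflectLast N hN ξ) : ℝ) = inner ℝ x ξ := by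
  rw [← reflIso_eq, ← reflIso_eq]
  exact (reflIso N hN).inner_map_map x ξ

lemma norm_refl (N : ℕ) (hN : 2 ≤ N) (ξ : EuclideanSpace ℝ (Fin N)) :
    ‖reflectLast N hN ξ‖ = ‖ξ‖ := by
  rw [← reflIso_eq]; exact (reflIso N hN).norm_map ξ

lemma fourierT_refl (N : ℕ) (hN : 2 ≤ N) (f : EuclideanSpace ℝ (Fin N) → ℂ)
    (ξ : EuclideanSpace ℝ (Fin N)) :
    fourierT f (reflectLast N hN ξ) = fourierT (fun x => f (reflectLast N hN x)) ξ := by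
  rw [fourierT, fourierT,
    ← (reflIso N hN).measurePreserving.integral_comp
      (reflIso N hN).toMeasurableEquiv.measurableEmbedding
      (fun x => Complex.exp (-Complex.I * ((inner ℝ x (reflectLast N hN ξ) : ℝ) : ℂ)) * f x)]
  congr 1
  funext x
  rw [reflIso_eq, inner_refl]

lemma potentialIntegrand_refl (N : ℕ) (hN : 2 ≤ N)
    (F : Fin N → EuclideanSpace ℝ (Fin N) → ℂ)
    (heven : ∀ j, j ≠ lastIdx N hN →
      ∀ x : EuclideanSpace ℝ (Fin N), F j (reflectLast N hN x) = F j x)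
    (hodd : ∀ x : EuclideanSpace ℝ (Fin N),
      F (lastIdx N hN) (reflectLast N hN x) = -F (lastIdx N hN) x)
    (x ξ : EuclideanSpace ℝ (Fin N)) :
    potentialIntegrand F (reflectLast N hN x) (reflectLast N hN ξ)
      = potentialIntegrand F x ξ := by
  unfold potentialIntegrand
  rw [inner_refl, norm_refl]
  congr 1
  refine Finset.sum_congr rfl fun j _ => ?_
  have hF : fourierT (F j) (reflectLast N hN ξ)
      = fourierT (fun y => F j (reflectLast N hN y)) ξ := fourierT_refl N hN _ ξ
  by_cases hj : j = lastIdx N hN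
  · subst hj
    have h1 : (fun y => F (lastIdx N hN) (reflectLast N hN y))
        = fun y => -F (lastIdx N hN) y := funext hodd
    have hneg : fourierT (fun y => -F (lastIdx N hN) y) ξ
        = -fourierT (F (lastIdx N hN)) ξ := by
      simp [fourierT, mul_neg, integral_neg]
    rw [hF, h1, hneg, reflectLast_apply, if_pos rfl]
    push_cast
    ring
  · have h1 : (fun y => F j (reflectLast N hN y)) = F j := funext (heven j hj)
    rw [hF, h1, reflectLast_apply, if_neg hj]

/-- If the first `N−1` components of the smooth compactly supported field `F` are even
in `x_N` and the last component is odd in `x_N`, then the Newtonian potential `v` is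
even in `x_N`, and consequently `∂v/∂x_N(x', 0) = 0`. -/
theorem stmt_13 (N : ℕ) (hN : 2 ≤ N) (F : Fin N → EuclideanSpace ℝ (Fin N) → ℂ)
    (hsm : ∀ j, ContDiff ℝ (⊤ : ℕ∞) (F j)) (hsupp : ∀ j, HasCompactSupport (F j))
    (heven : ∀ j, j ≠ lastIdx N hN →
      ∀ x : EuclideanSpace ℝ (Fin N), F j (reflectLast N hN x) = F j x)
    (hodd : ∀ x : EuclideanSpace ℝ (Fin N),
      F (lastIdx N hN) (reflectLast N hN x) = -F (lastIdx N hN) x) :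
    (∀ x : EuclideanSpace ℝ (Fin N),
        newtonianPotential F (reflectLast N hN x) = newtonianPotential F x) ∧
      ∀ x : EuclideanSpace ℝ (Fin N), x (lastIdx N hN) = 0 →
        fderiv ℝ (newtonianPotential F) x
          (EuclideanSpace.single (lastIdx N hN) 1) = 0 := by
  have hmain : ∀ x : EuclideanSpace ℝ (Fin N),
      newtonianPotential F (reflectLast N hN x) = newtonianPotential F x := by
    intro x
    unfold newtonianPotential
    congr 1
    rw [← (reflIso N hN).measurePreserving.integral_comp
      (reflIso N hN).toMeasurableEquiv.measurableEmbedding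
      (potentialIntegrand F (reflectLast N hN x))]
    congr 1
    funext ξ
    rw [reflIso_eq, potentialIntegrand_refl N hN F heven hodd x ξ]
  refine ⟨hmain, fun x hx => ?_⟩
  set L := (reflIso N hN).toContinuousLinearEquiv with hL
  set e := EuclideanSpace.single (lastIdx N hN) (1 : ℝ) with he
  have hfix : reflectLast N hN x = x := by
    rw [reflectLast, hx]
    simp
  have hLx : L x = x := by
    show reflIso N hN x = x
    rw [reflIso_eq, hfix]
  have hLe : (L : EuclideanSpace ℝ (Fin N) →L[ℝ] EuclideanSpace ℝ (Fin N)) e = -e := by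
    show reflIso N hN e = -e
    rw [reflIso_eq]
    ext j
    rw [reflectLast_apply]
    by_cases hj : j = lastIdx N hN
    · simp [hj, he, EuclideanSpace.single_apply]
    · simp [hj, he, EuclideanSpace.single_apply]
  have hfun : newtonianPotential F = (newtonianPotential F) ∘ L := by
    funext y
    show _ = newtonianPotential F (L y)
    show _ = newtonianPotential F (reflIso N hN y)
    rw [reflIso_eq, hmain]
  have key : fderiv ℝ (newtonianPotential F) x
      = (fderiv ℝ (newtonianPotential F) x).comp
          (L : EuclideanSpace ℝ (Fin N) →L[ℝ] EuclideanSpace ℝ (Fin N)) := by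
    conv_lhs => rw [hfun]
    rw [L.comp_right_fderiv, hLx]
  have h2 := congrArg (fun T : EuclideanSpace ℝ (Fin N) →L[ℝ] ℂ => T e) key
  simp only [ContinuousLinearMap.comp_apply, hLe, map_neg] at h2
  linear_combination h2 / 2
end
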